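/- For a Banach space X, the pair (X,X) has property (m) if and only if X has property (M), and the pair (X,X) has property (o) if and only if X has the Opial property. -/

import Mathlib

open Filter Topology

noncomputable def minMod {X Y : Type*} [NormedAddCommGroup X] [NormedSpace ℝ X]
    [NormedAddCommGroup Y] [NormedSpace ℝ Y] (T : X →L[ℝ] Y) : ℝ :=
  sInf {r : ℝ | ∃ x : X, ‖x‖ = 1 ∧ ‖T x‖ = r}

def WeaklyNull {X : Type*} [NormedAddCommGroup X] [NormedSpace ℝ X] (x : ℕ → X) : Prop :=
  ∀ f : X →L[ℝ] ℝ, Tendsto (fun n => f (x n)) atTop (𝓝 0)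

def AttainsMinMod {X Y : Type*} [NormedAddCommGroup X] [NormedSpace ℝ X]
    [NormedAddCommGroup Y] [NormedSpace ℝ Y] (T : X →L[ℝ] Y) : Prop :=
  ∃ x : X, ‖x‖ = 1 ∧ ‖T x‖ = minMod T

def PairPropM (X Y : Type*) [NormedAddCommGroup X] [NormedSpace ℝ X]
    [NormedAddCommGroup Y] [NormedSpace ℝ Y] : Prop :=
  ∀ T : X →L[ℝ] Y, 1 ≤ minMod T →
    ∀ (x : X) (y : Y), ‖x‖ ≤ ‖y‖ → ∀ xs : ℕ → X, WeaklyNull xs →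
      limsup (fun n => ‖x + xs n‖) atTop ≤ limsup (fun n => ‖y + T (xs n)‖) atTop

def PairPropO (X Y : Type*) [NormedAddCommGroup X] [NormedSpace ℝ X]
    [NormedAddCommGroup Y] [NormedSpace ℝ Y] : Prop :=
  ∀ T : X →L[ℝ] Y, 1 ≤ minMod T →
    ∀ y : Y, y ≠ 0 → ∀ xs : ℕ → X, WeaklyNull xs →
      limsup (fun n => ‖xs n‖) atTop < limsup (fun n => ‖y + T (xs n)‖) atTop

def PropertyM (X : Type*) [NormedAddCommGroup X] [NormedSpace ℝ X] : Prop :=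
  ∀ x y : X, ‖y‖ ≤ ‖x‖ → ∀ xs : ℕ → X, WeaklyNull xs →
    limsup (fun n => ‖y + xs n‖) atTop ≤ limsup (fun n => ‖x + xs n‖) atTop

def OpialProperty (X : Type*) [NormedAddCommGroup X] [NormedSpace ℝ X] : Prop :=
  ∀ x : X, x ≠ 0 → ∀ xs : ℕ → X, WeaklyNull xs →
    limsup (fun n => ‖xs n‖) atTop < limsup (fun n => ‖x + xs n‖) atTop

def WeakMinimizingProperty (X Y : Type*) [NormedAddCommGroup X] [NormedSpace ℝ X]
    [NormedAddCommGroup Y] [NormedSpace ℝ Y] : Prop :=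
  ∀ T : X →L[ℝ] Y,
    (∃ xs : ℕ → X, (∀ n, ‖xs n‖ = 1) ∧
      Tendsto (fun n => ‖T (xs n)‖) atTop (𝓝 (minMod T)) ∧ ¬ WeaklyNull xs) →
    AttainsMinMod T

/-! Taking `T = id` gives the implications from the pair properties. Conversely `‖x_n‖ ≤ ‖T x_n‖`
and `(T x_n)` is again weakly null, which settles (o). For (m), property (M) makes
`limsup ‖v + x_n‖` a monotone, 1-Lipschitz function of `‖v‖`, and makes `t ↦ limsup ‖y + t z_n‖`
a convex function taking equal values at `t = ±1`, so that `limsup ‖y + c z_n‖ ≤ limsup ‖y + z_n‖`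
for `0 ≤ c ≤ 1`. With `m = m(T)`, take a unit vector `u` with `‖T u‖` close to `m` and
`v = s • u` with `s` slightly below `‖x‖`. Then `‖v + x_n‖ ≤ ‖m⁻¹ • T v + m⁻¹ • T x_n‖` and
`‖m⁻¹ • T v‖ ≤ ‖y‖`, whence
`limsup ‖v + x_n‖ ≤ limsup ‖y + m⁻¹ • T x_n‖ ≤ limsup ‖y + T x_n‖`; let `s → ‖x‖`. -/

section MinMod

variable {X Y : Type*} [NormedAddCommGroup X] [NormedSpace ℝ X]
  [NormedAddCommGroup Y] [NormedSpace ℝ Y]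

lemma minMod_le_norm_apply (T : X →L[ℝ] Y) {u : X} (hu : ‖u‖ = 1) : minMod T ≤ ‖T u‖ :=
  csInf_le ⟨0, by rintro _ ⟨_, _, rfl⟩; exact norm_nonneg _⟩ ⟨u, hu, rfl⟩

lemma minMod_mul_norm_le (T : X →L[ℝ] Y) (z : X) : minMod T * ‖z‖ ≤ ‖T z‖ := by
  rcases eq_or_ne z 0 with rfl | hz
  · simp
  have hu : ‖‖z‖⁻¹ • z‖ = 1 := by simpa using norm_smul_inv_norm (𝕜 := ℝ) hz
  have h := minMod_le_norm_apply T hu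
  rwa [map_smul, norm_smul, norm_inv, norm_norm, inv_mul_eq_div,
    le_div_iff₀ (norm_pos_iff.2 hz)] at h

lemma le_minMod [Nontrivial X] {T : X →L[ℝ] Y} {r : ℝ} (h : ∀ u : X, ‖u‖ = 1 → r ≤ ‖T u‖) :
    r ≤ minMod T := by
  obtain ⟨z, hz⟩ := exists_norm_eq X zero_le_one
  exact le_csInf ⟨_, z, hz, rfl⟩ (by rintro _ ⟨u, hu, rfl⟩; exact h u hu)

lemma norm_le_norm_apply_of_one_le_minMod {T : X →L[ℝ] Y} (hT : 1 ≤ minMod T) (z : X) :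
    ‖z‖ ≤ ‖T z‖ :=
  le_trans (le_mul_of_one_le_left (norm_nonneg z) hT) (minMod_mul_norm_le T z)

lemma exists_norm_eq_one_norm_apply_lt [Nontrivial X] (T : X →L[ℝ] Y) {r : ℝ}
    (h : minMod T < r) : ∃ u : X, ‖u‖ = 1 ∧ ‖T u‖ < r := by
  by_contra! hge
  exact h.not_ge (le_minMod hge)

variable (X) in
lemma minMod_id [Nontrivial X] : minMod (ContinuousLinearMap.id ℝ X) = 1 := by
  obtain ⟨z, hz⟩ := exists_norm_eq X zero_le_one
  exact le_antisymm (by simpa [hz] using minMod_le_norm_apply (.id ℝ X) hz)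
    (le_minMod fun u hu => by simp [hu])

end MinMod

namespace WeaklyNull

variable {X Y : Type*} [NormedAddCommGroup X] [NormedSpace ℝ X]
  [NormedAddCommGroup Y] [NormedSpace ℝ Y] {xs : ℕ → X}

lemma map (h : WeaklyNull xs) (T : X →L[ℝ] Y) : WeaklyNull fun n => T (xs n) :=
  fun f => h (f.comp T)

-- Uniform boundedness, applied to the `xs n` seen as functionals on the dual, which is complete.
lemma exists_norm_le (h : WeaklyNull xs) : ∃ C, ∀ n, ‖xs n‖ ≤ C := by
  obtain ⟨C, hC⟩ :=
    banach_steinhaus (g := fun n => NormedSpace.inclusionInDoubleDual ℝ X (xs n)) fun f => by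
      obtain ⟨C, hC⟩ := (h f).norm.bddAbove_range
      exact ⟨C, fun n => hC ⟨n, rfl⟩⟩
  exact ⟨C, fun n => (NormedSpace.inclusionInDoubleDualLi ℝ).norm_map (xs n) ▸ hC n⟩

lemma isBoundedUnder_norm (h : WeaklyNull xs) :
    IsBoundedUnder (· ≤ ·) atTop fun n => ‖xs n‖ :=
  isBoundedUnder_of h.exists_norm_le

lemma isBoundedUnder_norm_add (h : WeaklyNull xs) (v : X) :
    IsBoundedUnder (· ≤ ·) atTop fun n => ‖v + xs n‖ := by
  obtain ⟨C, hC⟩ := h.exists_norm_le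
  exact isBoundedUnder_of ⟨‖v‖ + C, fun n => (norm_add_le _ _).trans (by linarith [hC n])⟩

end WeaklyNull

lemma isCoboundedUnder_le_norm {X : Type*} [NormedAddCommGroup X] (xs : ℕ → X) :
    IsCoboundedUnder (· ≤ ·) atTop fun n => ‖xs n‖ :=
  isCoboundedUnder_le_of_le atTop fun n => norm_nonneg (xs n)

namespace PropertyM

variable {X : Type*} [NormedAddCommGroup X] [NormedSpace ℝ X] {xs : ℕ → X}

lemma limsup_norm_add_smul_le (hM : PropertyM X) (hxs : WeaklyNull xs) (y : X) {c : ℝ}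
    (hc₀ : 0 ≤ c) (hc₁ : c ≤ 1) :
    limsup (fun n => ‖y + c • xs n‖) atTop ≤ limsup (fun n => ‖y + xs n‖) atTop := by
  set L := limsup (fun n => ‖y + xs n‖) atTop
  have hneg : limsup (fun n => ‖-y + xs n‖) atTop ≤ L := hM y (-y) (norm_neg y).le xs hxs
  refine le_of_forall_pos_le_add fun ε hε => limsup_le_of_le (isCoboundedUnder_le_norm _) ?_
  filter_upwards [eventually_lt_of_limsup_lt (lt_add_of_pos_right L hε)
      (hxs.isBoundedUnder_norm_add y),
    eventually_lt_of_limsup_lt (hneg.trans_lt (lt_add_of_pos_right L hε))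
      (hxs.isBoundedUnder_norm_add (-y))] with n hplus hminus
  have hsplit : y + c • xs n = ((1 + c) / 2) • (y + xs n) - ((1 - c) / 2) • (-y + xs n) := by
    module
  calc ‖y + c • xs n‖
      ≤ (1 + c) / 2 * ‖y + xs n‖ + (1 - c) / 2 * ‖-y + xs n‖ := by
        rw [hsplit]
        refine (norm_sub_le _ _).trans_eq ?_
        rw [norm_smul_of_nonneg (by linarith), norm_smul_of_nonneg (by linarith)]
    _ ≤ L + ε := by nlinarith

lemma limsup_norm_add_le_add_abs (hM : PropertyM X) (hxs : WeaklyNull xs) (a : X) {b : X}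
    (hb : b ≠ 0) :
    limsup (fun n => ‖a + xs n‖) atTop ≤ limsup (fun n => ‖b + xs n‖) atTop + |‖a‖ - ‖b‖| := by
  have hb' : ‖b‖ ≠ 0 := norm_ne_zero_iff.2 hb
  set b' := (‖a‖ / ‖b‖) • b
  have hnorm : ‖b'‖ = ‖a‖ := by
    rw [norm_smul_of_nonneg (by positivity), div_mul_cancel₀ _ hb']
  have hdist : ‖b' - b‖ = |‖a‖ - ‖b‖| := by
    have hcoeff : (‖a‖ / ‖b‖ - 1) * ‖b‖ = ‖a‖ - ‖b‖ := by field_simp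
    rw [← hcoeff, abs_mul, abs_norm, ← Real.norm_eq_abs, ← norm_smul, sub_smul, one_smul]
  calc limsup (fun n => ‖a + xs n‖) atTop
      ≤ limsup (fun n => ‖b' + xs n‖) atTop := hM b' a hnorm.ge xs hxs
    _ ≤ limsup (fun n => ‖b + xs n‖ + ‖b' - b‖) atTop := by
        refine limsup_le_limsup (Eventually.of_forall fun n => ?_) (isCoboundedUnder_le_norm _)
          (isBoundedUnder_le_add (hxs.isBoundedUnder_norm_add b) isBoundedUnder_const)
        calc ‖b' + xs n‖ = ‖(b + xs n) + (b' - b)‖ := by congr 1; abel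
          _ ≤ ‖b + xs n‖ + ‖b' - b‖ := norm_add_le _ _
    _ = limsup (fun n => ‖b + xs n‖) atTop + |‖a‖ - ‖b‖| := by
        rw [limsup_add_const _ _ _ (hxs.isBoundedUnder_norm_add b) (isCoboundedUnder_le_norm _),
          hdist]

lemma limsup_norm_add_le_of_norm_apply_le (hM : PropertyM X) {T : X →L[ℝ] X}
    (hT : 1 ≤ minMod T) {v y : X} (hv : ‖T v‖ ≤ minMod T * ‖y‖) (hxs : WeaklyNull xs) :
    limsup (fun n => ‖v + xs n‖) atTop ≤ limsup (fun n => ‖y + T (xs n)‖) atTop := by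
  set m := minMod T
  have hm : 0 < m := one_pos.trans_le hT
  calc limsup (fun n => ‖v + xs n‖) atTop
      ≤ limsup (fun n => ‖m⁻¹ • T v + m⁻¹ • T (xs n)‖) atTop := by
        refine limsup_le_limsup (Eventually.of_forall fun n => ?_) (isCoboundedUnder_le_norm _)
          ((hxs.map (m⁻¹ • T)).isBoundedUnder_norm_add _)
        dsimp only
        rw [← smul_add, ← map_add, norm_smul_of_nonneg (inv_nonneg.2 hm.le),
          le_inv_mul_iff₀ hm]
        exact minMod_mul_norm_le T _
    _ ≤ limsup (fun n => ‖y + m⁻¹ • T (xs n)‖) atTop := by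
        refine hM y _ ?_ _ (hxs.map (m⁻¹ • T))
        rwa [norm_smul_of_nonneg (inv_nonneg.2 hm.le), inv_mul_le_iff₀ hm]
    _ ≤ limsup (fun n => ‖y + T (xs n)‖) atTop :=
        hM.limsup_norm_add_smul_le (hxs.map T) y (inv_nonneg.2 hm.le) (inv_le_one_of_one_le₀ hT)

theorem pairPropM (hM : PropertyM X) : PairPropM X X := by
  intro T hT x y hxy xs hxs
  set L := limsup (fun n => ‖y + T (xs n)‖) atTop
  rcases eq_or_ne x 0 with rfl | hx
  · exact hM.limsup_norm_add_le_of_norm_apply_le hT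
      (by rw [map_zero, norm_zero]; exact mul_nonneg (zero_le_one.trans hT) (norm_nonneg y)) hxs
  have : Nontrivial X := nontrivial_of_ne x 0 hx
  have hbound : ∀ s ∈ Set.Ioo 0 ‖x‖, limsup (fun n => ‖x + xs n‖) atTop ≤ L + |‖x‖ - s| := by
    rintro s ⟨hs, hsx⟩
    obtain ⟨u, hu, hTu⟩ := exists_norm_eq_one_norm_apply_lt T (r := minMod T * ‖y‖ / s) <| by
      rw [lt_div_iff₀ hs]
      exact mul_lt_mul_of_pos_left (hsx.trans_le hxy) (one_pos.trans_le hT)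
    have hsu : ‖s • u‖ = s := by rw [norm_smul_of_nonneg hs.le, hu, mul_one]
    calc limsup (fun n => ‖x + xs n‖) atTop
        ≤ limsup (fun n => ‖s • u + xs n‖) atTop + |‖x‖ - ‖s • u‖| :=
          hM.limsup_norm_add_le_add_abs hxs x (norm_pos_iff.1 (hsu.symm ▸ hs))
      _ ≤ L + |‖x‖ - s| := by
          rw [hsu]
          gcongr
          refine hM.limsup_norm_add_le_of_norm_apply_le hT ?_ hxs
          rw [map_smul, norm_smul_of_nonneg hs.le, ← le_div_iff₀' hs]
          exact hTu.le
  have hlim : Tendsto (fun s => L + |‖x‖ - s|) (𝓝[<] ‖x‖) (𝓝 L) := by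
    have : Continuous fun s => L + |‖x‖ - s| := by fun_prop
    simpa using (this.tendsto ‖x‖).mono_left nhdsWithin_le_nhds
  exact ge_of_tendsto hlim (eventually_of_mem (Ioo_mem_nhdsLT (norm_pos_iff.2 hx)) hbound)

end PropertyM

theorem PairPropM.propertyM {X : Type*} [NormedAddCommGroup X] [NormedSpace ℝ X]
    (h : PairPropM X X) : PropertyM X := by
  intro x y hyx xs hxs
  rcases subsingleton_or_nontrivial X with hX | hX
  · rw [Subsingleton.elim y x]
  · simpa using h _ (minMod_id X).ge y x hyx xs hxs

theorem PairPropO.opialProperty {X : Type*} [NormedAddCommGroup X] [NormedSpace ℝ X]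
    (h : PairPropO X X) : OpialProperty X := by
  intro x hx xs hxs
  have : Nontrivial X := nontrivial_of_ne x 0 hx
  simpa using h _ (minMod_id X).ge x hx xs hxs

theorem OpialProperty.pairPropO {X : Type*} [NormedAddCommGroup X] [NormedSpace ℝ X]
    (hO : OpialProperty X) : PairPropO X X := fun T hT y hy xs hxs =>
  (limsup_le_limsup (Eventually.of_forall fun n => norm_le_norm_apply_of_one_le_minMod hT (xs n))
    (isCoboundedUnder_le_norm _) (hxs.map T).isBoundedUnder_norm).trans_lt
    (hO y hy _ (hxs.map T))

theorem stmt11_general {X : Type*} [NormedAddCommGroup X] [NormedSpace ℝ X] :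
    (PairPropM X X ↔ PropertyM X) ∧ (PairPropO X X ↔ OpialProperty X) :=
  ⟨⟨PairPropM.propertyM, PropertyM.pairPropM⟩, ⟨PairPropO.opialProperty, OpialProperty.pairPropO⟩⟩

theorem stmt11 {X : Type*} [NormedAddCommGroup X] [NormedSpace ℝ X] [CompleteSpace X] :
    (PairPropM X X ↔ PropertyM X) ∧ (PairPropO X X ↔ OpialProperty X) :=
  stmt11_general
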